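/- Let 0 < α < 1, let φ : ℝ^L → ℝ^L be continuous and K-Lipschitz componentwise (in the ℓ¹ sense) with K > 0, and fix x₀ ∈ ℝ^L. If N > 0 is chosen so that L·K < N^{α}, then the fractional Volterra operator T_{x₀} is a contraction on the complete metric space C([0,T], ℝ^L) with metric d(x, y) = ‖x − y‖*, i.e. there is a constant c < 1 (namely c = L·K/N^{α}) such that ‖T_{x₀} x − T_{x₀} y‖* ≤ c ‖x − y‖* for all continuous x, y. -/

import Mathlib

/-!
The weight `e^{-Nt}` is matched to the kernel: `e^{-Nt} ∫_0^t (t-s)^{α-1} e^{Ns} ds` is the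
truncated Gamma integral `∫_0^t u^{α-1} e^{-Nu} du ≤ Γ(α)/N^α`. So if every component of `x - y`
is bounded by `e^{Ns}` times its weighted sup, the Lipschitz bound on `φ` makes each component of
`T x - T y` at most `K ‖x - y‖* / N^α` in weighted sup, and summing the `L` components gives the
factor `L K / N^α`.
-/

open scoped BigOperators

/-- The fractional Volterra operator
`(T_{x₀} x)_k(t) = (x₀)_k + (1/Γ(α)) ∫_0^t (t-s)^{α-1} φ_k(x(s)) ds`. -/
noncomputable def volterraOp {L : ℕ} (α : ℝ) (x₀ : Fin L → ℝ)
    (φ : (Fin L → ℝ) → (Fin L → ℝ)) (x : ℝ → Fin L → ℝ) (t : ℝ) (k : Fin L) : ℝ :=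
  x₀ k + (1 / Real.Gamma α) * ∫ s in (0:ℝ)..t, (t - s) ^ (α - 1) * φ (x s) k

open MeasureTheory Real Set

noncomputable def riemannLiouville (α : ℝ) (g : ℝ → ℝ) (t : ℝ) : ℝ :=
  1 / Gamma α * ∫ s in (0:ℝ)..t, (t - s) ^ (α - 1) * g s

/-- One component of the weighted sup norm `‖·‖*` on `[0, T]`. -/
noncomputable def expWeightedSup (N T : ℝ) (f : ℝ → ℝ) : ℝ :=
  ⨆ t : Icc (0:ℝ) T, exp (-N * t) * |f t|

lemma volterraOp_eq {L : ℕ} (α : ℝ) (x₀ : Fin L → ℝ) (φ : (Fin L → ℝ) → (Fin L → ℝ))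
    (x : ℝ → Fin L → ℝ) (t : ℝ) (k : Fin L) :
    volterraOp α x₀ φ x t k = x₀ k + riemannLiouville α (fun s => φ (x s) k) t :=
  rfl

section ExpWeightedSup

variable {N T : ℝ} {f : ℝ → ℝ}

lemma expWeightedSup_nonneg : 0 ≤ expWeightedSup N T f :=
  Real.iSup_nonneg fun _ => by positivity

lemma expWeightedSup_le {C : ℝ} (hC : 0 ≤ C) (h : ∀ t ∈ Icc 0 T, exp (-N * t) * |f t| ≤ C) :
    expWeightedSup N T f ≤ C :=
  Real.iSup_le (fun t => h t t.2) hC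

lemma abs_le_exp_mul_expWeightedSup (hf : ContinuousOn f (Icc 0 T)) {s : ℝ} (hs : s ∈ Icc 0 T) :
    |f s| ≤ exp (N * s) * expWeightedSup N T f := by
  have hbdd : BddAbove (range fun t : Icc (0:ℝ) T => exp (-N * t) * |f t|) :=
    (isCompact_range ((continuous_exp.comp (continuous_const.mul continuous_subtype_val)).mul
      hf.domRestrict.abs)).bddAbove
  calc |f s| = exp (N * s) * (exp (-N * s) * |f s|) := by
        rw [← mul_assoc, ← exp_add, show N * s + -N * s = 0 by ring, exp_zero, one_mul]
    _ ≤ exp (N * s) * expWeightedSup N T f :=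
        mul_le_mul_of_nonneg_left (le_ciSup hbdd ⟨s, hs⟩) (exp_pos _).le

end ExpWeightedSup

section RiemannLiouville

variable {α N t : ℝ}

lemma intervalIntegrable_rpow_sub_mul (hα : 0 < α) (ht : 0 ≤ t) {g : ℝ → ℝ}
    (hg : ContinuousOn g (Icc 0 t)) :
    IntervalIntegrable (fun s => (t - s) ^ (α - 1) * g s) volume 0 t := by
  have hkernel : IntervalIntegrable (fun s : ℝ => (t - s) ^ (α - 1)) volume 0 t := by
    have hpow : IntervalIntegrable (fun u : ℝ => u ^ (α - 1)) volume 0 t :=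
      intervalIntegral.intervalIntegrable_rpow' (by linarith)
    simpa using (hpow.comp_sub_left t).symm
  exact hkernel.mul_continuousOn (by rwa [uIcc_of_le ht])

lemma integral_rpow_mul_exp_neg_mul_le (hα : 0 < α) (hN : 0 < N) (ht : 0 ≤ t) :
    ∫ u in (0:ℝ)..t, u ^ (α - 1) * exp (-(N * u)) ≤ Gamma α / N ^ α := by
  have hint : IntegrableOn (fun u : ℝ => u ^ (α - 1) * exp (-(N * u))) (Ioi 0) := by
    simpa [rpow_one, neg_mul] using
      integrableOn_rpow_mul_exp_neg_mul_rpow (by linarith : (-1:ℝ) < α - 1) one_pos hN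
  calc ∫ u in (0:ℝ)..t, u ^ (α - 1) * exp (-(N * u))
      = ∫ u in Ioc 0 t, u ^ (α - 1) * exp (-(N * u)) := intervalIntegral.integral_of_le ht
    _ ≤ ∫ u in Ioi 0, u ^ (α - 1) * exp (-(N * u)) := by
        refine setIntegral_mono_set hint ?_ Ioc_subset_Ioi_self.eventuallyLE
        filter_upwards [ae_restrict_mem measurableSet_Ioi] with u (hu : 0 < u)
        positivity
    _ = Gamma α / N ^ α := by
        rw [integral_rpow_mul_exp_neg_mul_Ioi hα hN, one_div, inv_rpow hN.le, inv_mul_eq_div]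

lemma integral_rpow_sub_mul_exp_le (hα : 0 < α) (hN : 0 < N) (ht : 0 ≤ t) :
    ∫ s in (0:ℝ)..t, (t - s) ^ (α - 1) * exp (N * s) ≤ exp (N * t) * (Gamma α / N ^ α) := by
  have hshift : ∀ s, (t - s) ^ (α - 1) * exp (N * s)
      = exp (N * t) * ((t - s) ^ (α - 1) * exp (-(N * (t - s)))) := fun s => by
    rw [mul_left_comm, ← exp_add, show N * t + -(N * (t - s)) = N * s by ring]
  simp_rw [hshift, intervalIntegral.integral_const_mul,
    intervalIntegral.integral_comp_sub_left (fun u => u ^ (α - 1) * exp (-(N * u))) t,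
    sub_self, sub_zero]
  exact mul_le_mul_of_nonneg_left (integral_rpow_mul_exp_neg_mul_le hα hN ht) (exp_pos _).le

lemma riemannLiouville_sub (hα : 0 < α) (ht : 0 ≤ t) {f g : ℝ → ℝ}
    (hf : ContinuousOn f (Icc 0 t)) (hg : ContinuousOn g (Icc 0 t)) :
    riemannLiouville α f t - riemannLiouville α g t = riemannLiouville α (f - g) t := by
  simp only [riemannLiouville, Pi.sub_apply, mul_sub]
  rw [intervalIntegral.integral_sub (intervalIntegrable_rpow_sub_mul hα ht hf)
    (intervalIntegrable_rpow_sub_mul hα ht hg), mul_sub]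

lemma exp_neg_mul_abs_riemannLiouville_le (hα : 0 < α) (hN : 0 < N) (ht : 0 ≤ t)
    {g : ℝ → ℝ} {C : ℝ} (hg : ContinuousOn g (Icc 0 t))
    (hgC : ∀ s ∈ Icc 0 t, |g s| ≤ C * exp (N * s)) :
    exp (-N * t) * |riemannLiouville α g t| ≤ C / N ^ α := by
  have hC : 0 ≤ C := by
    simpa using (abs_nonneg _).trans (hgC 0 ⟨le_rfl, ht⟩)
  have hΓ : 0 < Gamma α := Gamma_pos_of_pos hα
  have hintegral : |∫ s in (0:ℝ)..t, (t - s) ^ (α - 1) * g s|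
      ≤ C * (exp (N * t) * (Gamma α / N ^ α)) := by
    calc |∫ s in (0:ℝ)..t, (t - s) ^ (α - 1) * g s|
        ≤ ∫ s in (0:ℝ)..t, |(t - s) ^ (α - 1) * g s| :=
          intervalIntegral.abs_integral_le_integral_abs ht
      _ ≤ ∫ s in (0:ℝ)..t, C * ((t - s) ^ (α - 1) * exp (N * s)) := by
          refine intervalIntegral.integral_mono_on ht
            (intervalIntegrable_rpow_sub_mul hα ht hg).abs
            ((intervalIntegrable_rpow_sub_mul hα ht (by fun_prop)).const_mul C) fun s hs => ?_
          have hkernel : 0 ≤ (t - s) ^ (α - 1) := rpow_nonneg (by linarith [hs.2]) _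
          rw [abs_mul, abs_of_nonneg hkernel, mul_left_comm]
          exact mul_le_mul_of_nonneg_left (hgC s hs) hkernel
      _ ≤ C * (exp (N * t) * (Gamma α / N ^ α)) := by
          rw [intervalIntegral.integral_const_mul]
          exact mul_le_mul_of_nonneg_left (integral_rpow_sub_mul_exp_le hα hN ht) hC
  calc exp (-N * t) * |riemannLiouville α g t|
      = exp (-N * t) * (1 / Gamma α * |∫ s in (0:ℝ)..t, (t - s) ^ (α - 1) * g s|) := by
        rw [riemannLiouville, abs_mul, abs_of_pos (by positivity : 0 < 1 / Gamma α)]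
    _ ≤ exp (-N * t) * (1 / Gamma α * (C * (exp (N * t) * (Gamma α / N ^ α)))) := by
        gcongr
    _ = C / N ^ α := by
        rw [show -N * t = -(N * t) by ring, exp_neg]
        field_simp

end RiemannLiouville

section Volterra

variable {L : ℕ} {N T : ℝ} {φ : (Fin L → ℝ) → (Fin L → ℝ)} {x y : ℝ → Fin L → ℝ}

lemma abs_sub_le_mul_exp_of_lipschitz {K : ℝ} (hK : 0 ≤ K)
    (hφ : ∀ (k : Fin L) (u v : Fin L → ℝ), |φ u k - φ v k| ≤ K * ∑ j : Fin L, |u j - v j|)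
    (hx : ContinuousOn x (Icc 0 T)) (hy : ContinuousOn y (Icc 0 T)) {s : ℝ} (hs : s ∈ Icc 0 T)
    (k : Fin L) :
    |φ (x s) k - φ (y s) k|
      ≤ K * (∑ j, expWeightedSup N T (fun t => x t j - y t j)) * exp (N * s) :=
  calc |φ (x s) k - φ (y s) k| ≤ K * ∑ j, |x s j - y s j| := hφ k _ _
    _ ≤ K * ∑ j, exp (N * s) * expWeightedSup N T (fun t => x t j - y t j) := by
        gcongr with j
        exact abs_le_exp_mul_expWeightedSup
          (((continuous_apply j).comp_continuousOn hx).sub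
            ((continuous_apply j).comp_continuousOn hy)) hs
    _ = K * (∑ j, expWeightedSup N T (fun t => x t j - y t j)) * exp (N * s) := by
        rw [← Finset.mul_sum]; ring

lemma expWeightedSup_volterraOp_sub_le {α C : ℝ} (hα : 0 < α) (hN : 0 < N) (hC : 0 ≤ C)
    (x₀ : Fin L → ℝ) (hφc : Continuous φ) (hx : ContinuousOn x (Icc 0 T))
    (hy : ContinuousOn y (Icc 0 T)) (k : Fin L)
    (hxy : ∀ s ∈ Icc 0 T, |φ (x s) k - φ (y s) k| ≤ C * exp (N * s)) :
    expWeightedSup N T (fun t => volterraOp α x₀ φ x t k - volterraOp α x₀ φ y t k)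
      ≤ C / N ^ α := by
  refine expWeightedSup_le (by positivity) fun t ⟨ht0, htT⟩ => ?_
  have hsub : Icc 0 t ⊆ Icc 0 T := Icc_subset_Icc_right htT
  have hxt : ContinuousOn (fun s => φ (x s) k) (Icc 0 t) :=
    ((continuous_apply k).comp hφc).comp_continuousOn (hx.mono hsub)
  have hyt : ContinuousOn (fun s => φ (y s) k) (Icc 0 t) :=
    ((continuous_apply k).comp hφc).comp_continuousOn (hy.mono hsub)
  rw [volterraOp_eq, volterraOp_eq, add_sub_add_left_eq_sub, riemannLiouville_sub hα ht0 hxt hyt]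
  exact exp_neg_mul_abs_riemannLiouville_le hα hN ht0 (hxt.sub hyt) fun s hs => hxy s (hsub hs)

end Volterra

theorem volterra_operator_is_contraction_general
    (T : ℝ) (L : ℕ) (α : ℝ) (hα : 0 < α)
    (K : ℝ) (hK : 0 < K)
    (φ : (Fin L → ℝ) → (Fin L → ℝ)) (hφc : Continuous φ)
    (hφ : ∀ (k : Fin L) (u v : Fin L → ℝ), |φ u k - φ v k| ≤ K * ∑ j : Fin L, |u j - v j|)
    (x₀ : Fin L → ℝ)
    (N : ℝ) (hN : 0 < N) (hNK : (L : ℝ) * K < N ^ α) :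
    (L : ℝ) * K / N ^ α < 1 ∧
    ∀ x y : ℝ → Fin L → ℝ,
      ContinuousOn x (Set.Icc 0 T) → ContinuousOn y (Set.Icc 0 T) →
      (∑ k : Fin L, ⨆ t : Set.Icc (0:ℝ) T,
          Real.exp (-N * (t : ℝ)) * |volterraOp α x₀ φ x t k - volterraOp α x₀ φ y t k|)
        ≤ ((L : ℝ) * K / N ^ α) *
          ∑ k : Fin L, ⨆ t : Set.Icc (0:ℝ) T, Real.exp (-N * (t : ℝ)) * |x t k - y t k| := by
  refine ⟨(div_lt_one (rpow_pos_of_pos hN α)).2 hNK, fun x y hx hy => ?_⟩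
  change ∑ k, expWeightedSup N T (fun t => volterraOp α x₀ φ x t k - volterraOp α x₀ φ y t k)
    ≤ L * K / N ^ α * ∑ k, expWeightedSup N T (fun t => x t k - y t k)
  set M := ∑ k, expWeightedSup N T (fun t => x t k - y t k)
  have hM : 0 ≤ M := Finset.sum_nonneg fun _ _ => expWeightedSup_nonneg
  calc ∑ k, expWeightedSup N T (fun t => volterraOp α x₀ φ x t k - volterraOp α x₀ φ y t k)
      ≤ ∑ _k : Fin L, K * M / N ^ α := Finset.sum_le_sum fun k _ =>
        expWeightedSup_volterraOp_sub_le hα hN (by positivity) x₀ hφc hx hy k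
          fun s hs => abs_sub_le_mul_exp_of_lipschitz hK.le hφ hx hy hs k
    _ = L * K / N ^ α * M := by
        rw [Finset.sum_const, Finset.card_univ, Fintype.card_fin, nsmul_eq_mul]; ring

/-- For `0 < α < 1`, `φ` continuous and `K`-Lipschitz componentwise with
`K > 0`, and `N > 0` with `L·K < N^α`, the fractional Volterra operator is a contraction
for the weighted norm `‖·‖*`: the constant `c = L·K/N^α` satisfies `c < 1` and
`‖T_{x₀} x − T_{x₀} y‖* ≤ c·‖x − y‖*` for all continuous `x, y`. -/
theorem volterra_operator_is_contraction
    (T : ℝ) (hT : 0 < T) (L : ℕ) (hL : 1 ≤ L) (α : ℝ) (hα : 0 < α) (hα1 : α < 1)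
    (K : ℝ) (hK : 0 < K)
    (φ : (Fin L → ℝ) → (Fin L → ℝ)) (hφc : Continuous φ)
    (hφ : ∀ (k : Fin L) (u v : Fin L → ℝ), |φ u k - φ v k| ≤ K * ∑ j : Fin L, |u j - v j|)
    (x₀ : Fin L → ℝ)
    (N : ℝ) (hN : 0 < N) (hNK : (L : ℝ) * K < N ^ α) :
    (L : ℝ) * K / N ^ α < 1 ∧
    ∀ x y : ℝ → Fin L → ℝ,
      ContinuousOn x (Set.Icc 0 T) → ContinuousOn y (Set.Icc 0 T) →
      (∑ k : Fin L, ⨆ t : Set.Icc (0:ℝ) T,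
          Real.exp (-N * (t : ℝ)) * |volterraOp α x₀ φ x t k - volterraOp α x₀ φ y t k|)
        ≤ ((L : ℝ) * K / N ^ α) *
          ∑ k : Fin L, ⨆ t : Set.Icc (0:ℝ) T, Real.exp (-N * (t : ℝ)) * |x t k - y t k| :=
  volterra_operator_is_contraction_general T L α hα K hK φ hφc hφ x₀ N hN hNK
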